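/- Let K and K' be positive real constants and let {ξ_n}_{n≥0} be a real-valued process adapted to a filtration {𝓕_n}_{n≥0} on a probability space, with ξ_0 integrable, such that almost surely for every n: E(ξ_{n+1} | 𝓕_n) ≥ ξ_n + K and |ξ_{n+1} − ξ_n| ≤ K'. Let T ∈ ℝ and let τ = inf{n ∈ ℕ : ξ_n ≥ T} (with inf ∅ = ∞). Then P(τ < ∞) = 1. -/

import Mathlib

open MeasureTheory Filter
open scoped ENNReal

/-!
Since `E(ξ_{n+1} | 𝓕_n) ≥ ξ_n + K`, the process `ξ_n - n K` is a submartingale. Optional stopping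
at `σ_n = min τ n` gives `E ξ_0 ≤ E ξ_{σ_n} - K E σ_n`. Before `τ` the process stays below `T`
and one increment adds at most `K'`, so `ξ_{σ_n} ≤ max ξ_0 (T + K')`, while `σ_n = n` on
`{τ = ∞}`. Hence `n K P(τ = ∞) ≤ E (max ξ_0 (T + K')) - E ξ_0` for every `n`, so `P(τ = ∞) = 0`.
-/

section

variable {Ω : Type*} {m : MeasurableSpace Ω} {μ : Measure Ω}

theorem integrable_of_abs_sub_le [IsFiniteMeasure μ] {ξ : ℕ → Ω → ℝ} {C : ℝ}
    (h0 : Integrable (ξ 0) μ) (hmeas : ∀ n, AEStronglyMeasurable (ξ n) μ)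
    (hinc : ∀ n, ∀ᵐ ω ∂μ, |ξ (n + 1) ω - ξ n ω| ≤ C) (n : ℕ) :
    Integrable (ξ n) μ := by
  induction n with
  | zero => exact h0
  | succ n ih =>
    refine Integrable.mono' (ih.abs.add (integrable_const C)) (hmeas (n + 1)) ?_
    filter_upwards [hinc n] with ω hω
    have hreverse := abs_sub_abs_le_abs_sub (ξ (n + 1) ω) (ξ n ω)
    simp only [Real.norm_eq_abs, Pi.add_apply]
    linarith

theorem submartingale_sub_mul_of_add_le_condExp [IsFiniteMeasure μ] {𝓕 : Filtration ℕ m}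
    {ξ : ℕ → Ω → ℝ} {K : ℝ} (hadapted : Adapted 𝓕 ξ) (hint : ∀ n, Integrable (ξ n) μ)
    (hdrift : ∀ n, ∀ᵐ ω ∂μ, ξ n ω + K ≤ (μ[ξ (n + 1) | 𝓕 n]) ω) :
    Submartingale (fun n ω => ξ n ω - n * K) 𝓕 μ := by
  refine submartingale_nat ?_ (fun n => (hint n).sub (integrable_const _)) fun n => ?_
  · exact fun n => ((hadapted n).sub measurable_const).stronglyMeasurable
  · have hsub : μ[fun ω => ξ (n + 1) ω - (n + 1 : ℕ) * K | 𝓕 n]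
        =ᵐ[μ] μ[ξ (n + 1) | 𝓕 n] - fun _ => ((n + 1 : ℕ) * K : ℝ) := by
      refine (condExp_sub (hint (n + 1)) (integrable_const _) _).trans ?_
      rw [condExp_const (𝓕.le n)]
    filter_upwards [hdrift n, hsub] with ω hω hωsub
    rw [hωsub]
    push_cast at hω ⊢
    simp only [Pi.sub_apply]
    linarith

theorem le_max_of_sub_le_of_forall_lt {x : ℕ → ℝ} {C T : ℝ} (hinc : ∀ k, x (k + 1) - x k ≤ C)
    {s : ℕ} (hs : ∀ k < s, x k < T) : x s ≤ max (x 0) (T + C) := by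
  cases s with
  | zero => exact le_max_left _ _
  | succ k =>
    have hstep := hinc k
    have hbelow := hs k k.lt_succ_self
    exact le_max_of_le_right (by linarith)

theorem integral_le_integral_sub_mul_of_isStoppingTime {𝓕 : Filtration ℕ m}
    [SigmaFiniteFiltration μ 𝓕] {ξ : ℕ → Ω → ℝ} {K : ℝ}
    (hsub : Submartingale (fun n ω => ξ n ω - n * K) 𝓕 μ) {σ : Ω → ℕ}
    (hσ : IsStoppingTime 𝓕 fun ω => (σ ω : ℕ∞)) {N : ℕ} (hσN : ∀ ω, (σ ω : ℕ∞) ≤ N) :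
    ∫ ω, ξ 0 ω ∂μ ≤ ∫ ω, ξ (σ ω) ω - σ ω * K ∂μ := by
  refine Eq.trans_le (integral_congr_ae (ae_of_all _ fun ω => ?_))
    (hsub.expected_stoppedValue_mono (isStoppingTime_const 𝓕 0) hσ
      (fun _ => WithTop.coe_le_coe.mpr (Nat.zero_le _)) hσN)
  show ξ 0 ω = ξ 0 ω - ((0 : ℕ) : ℝ) * K
  simp

theorem natCast_mul_measureReal_forall_lt_le [IsFiniteMeasure μ] {𝓕 : Filtration ℕ m}
    {ξ : ℕ → Ω → ℝ} {K C T : ℝ} (hK : 0 ≤ K) (hadapted : Adapted 𝓕 ξ)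
    (hsub : Submartingale (fun n ω => ξ n ω - n * K) 𝓕 μ)
    (hinc : ∀ᵐ ω ∂μ, ∀ k, ξ (k + 1) ω - ξ k ω ≤ C) (n : ℕ) :
    n * (K * μ.real {ω | ∀ k, ξ k ω < T}) ≤
      ∫ ω, max (ξ 0 ω) (T + C) ∂μ - ∫ ω, ξ 0 ω ∂μ := by
  set A := {ω | ∀ k, ξ k ω < T}
  -- `σ = min τ n`: `hittingBtwn` returns `n` when the level is not reached by time `n`
  set σ : Ω → ℕ := hittingBtwn ξ (Set.Ici T) 0 n
  have hσ : IsStoppingTime 𝓕 fun ω => (σ ω : ℕ∞) :=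
    hadapted.isStoppingTime_hittingBtwn measurableSet_Ici
  have hσ_le (ω : Ω) : (σ ω : ℕ∞) ≤ n := WithTop.coe_le_coe.mpr (hittingBtwn_le ω)
  have hstop := integral_le_integral_sub_mul_of_isStoppingTime hsub hσ hσ_le
  have hA : MeasurableSet A := by
    simp only [A, Set.ofPred_forall]
    exact MeasurableSet.iInter fun k =>
      measurableSet_lt ((hadapted k).mono (𝓕.le k) le_rfl) measurable_const
  have hσA : ∀ ω ∈ A, σ ω = n := fun ω hω =>
    hittingBtwn_eq_end_iff.mpr fun ⟨j, _, hj⟩ => absurd (hω j) (not_lt.mpr hj)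
  have hbound : ∀ᵐ ω ∂μ, ξ (σ ω) ω - σ ω * K ≤
      max (ξ 0 ω) (T + C) - A.indicator (fun _ => n * K) ω := by
    filter_upwards [hinc] with ω hω
    have hmax : ξ (σ ω) ω ≤ max (ξ 0 ω) (T + C) :=
      le_max_of_sub_le_of_forall_lt (x := fun k => ξ k ω) hω fun k hk =>
        not_le.mp (notMem_of_lt_hittingBtwn hk (Nat.zero_le k))
    by_cases hωA : ω ∈ A
    · simp only [Set.indicator_of_mem hωA, hσA ω hωA] at hmax ⊢
      linarith
    · simp only [Set.indicator_of_notMem hωA]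
      nlinarith [(σ ω).cast_nonneg (α := ℝ)]
  have hint_stop : Integrable (fun ω => ξ (σ ω) ω - σ ω * K) μ :=
    hsub.integrable_stoppedValue hσ hσ_le
  have hint_max : Integrable (fun ω => max (ξ 0 ω) (T + C)) μ :=
    (by simpa using hsub.integrable 0 : Integrable (ξ 0) μ).sup (integrable_const _)
  have hint_ind : Integrable (A.indicator fun _ => n * K) μ := (integrable_const _).indicator hA
  have := hstop.trans (integral_mono_ae hint_stop (hint_max.sub hint_ind) hbound)
  rw [Pi.sub_def, integral_sub hint_max hint_ind, integral_indicator_const _ hA, smul_eq_mul]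
    at this
  linarith

theorem eq_zero_of_forall_natCast_mul_le {α : Type*} [Field α] [LinearOrder α]
    [IsStrictOrderedRing α] [Archimedean α] {a b : α} (ha : 0 ≤ a)
    (h : ∀ n : ℕ, n * a ≤ b) : a = 0 := by
  refine ha.antisymm' (not_lt.mp fun hpos => ?_)
  obtain ⟨n, hn⟩ := exists_nat_gt (b / a)
  exact (h n).not_gt ((div_lt_iff₀ hpos).mp hn)

end

theorem hitting_time_finite_as_general {Ω : Type*} {m : MeasurableSpace Ω}
    (μ : Measure Ω) [IsProbabilityMeasure μ]
    (𝓕 : Filtration ℕ m) (ξ : ℕ → Ω → ℝ) (K K' : ℝ) (hK : 0 < K)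
    (hadapted : Adapted 𝓕 ξ) (hint : Integrable (ξ 0) μ)
    (hdrift : ∀ n : ℕ, ∀ᵐ ω ∂μ,
      ξ n ω + K ≤ (μ[ξ (n + 1) | 𝓕 n]) ω ∧ |ξ (n + 1) ω - ξ n ω| ≤ K')
    (T : ℝ) :
    μ {ω | (⨅ (n : ℕ) (_ : T ≤ ξ n ω), (n : ℝ≥0∞)) < ⊤} = 1 := by
  have hint_all : ∀ n, Integrable (ξ n) μ :=
    integrable_of_abs_sub_le hint
      (fun n => ((hadapted n).mono (𝓕.le n) le_rfl).aestronglyMeasurable)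
      (fun n => (hdrift n).mono fun _ h => h.2)
  have hsub := submartingale_sub_mul_of_add_le_condExp hadapted hint_all
    (fun n => (hdrift n).mono fun _ h => h.1)
  have hinc : ∀ᵐ ω ∂μ, ∀ k, ξ (k + 1) ω - ξ k ω ≤ K' :=
    ae_all_iff.mpr fun k => (hdrift k).mono fun _ h => (abs_le.mp h.2).2
  have hnever : μ.real {ω | ∀ k, ξ k ω < T} = 0 := by
    have hKA : K * μ.real {ω | ∀ k, ξ k ω < T} = 0 :=
      eq_zero_of_forall_natCast_mul_le (by positivity)
        (natCast_mul_measureReal_forall_lt_le hK.le hadapted hsub hinc)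
    exact (mul_eq_zero.mp hKA).resolve_left hK.ne'
  have hcompl :
      {ω | (⨅ (n : ℕ) (_ : T ≤ ξ n ω), (n : ℝ≥0∞)) < ⊤}ᶜ = {ω | ∀ k, ξ k ω < T} := by
    ext ω
    simp [iInf_lt_iff]
  rw [measure_congr (ae_eq_univ.mpr ?_), measure_univ]
  rwa [hcompl, ← measureReal_eq_zero_iff]

/-- a process with uniformly positive drift and bounded increments hits any
level `T` in finite time almost surely (Lemma `lem6a` of the paper). -/
theorem hitting_time_finite_as {Ω : Type*} {m : MeasurableSpace Ω}
    (μ : Measure Ω) [IsProbabilityMeasure μ]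
    (𝓕 : Filtration ℕ m) (ξ : ℕ → Ω → ℝ) (K K' : ℝ) (hK : 0 < K) (hK' : 0 < K')
    (hadapted : Adapted 𝓕 ξ) (hint : Integrable (ξ 0) μ)
    (hdrift : ∀ n : ℕ, ∀ᵐ ω ∂μ,
      ξ n ω + K ≤ (μ[ξ (n + 1) | 𝓕 n]) ω ∧ |ξ (n + 1) ω - ξ n ω| ≤ K')
    (T : ℝ) :
    μ {ω | (⨅ (n : ℕ) (_ : T ≤ ξ n ω), (n : ℝ≥0∞)) < ⊤} = 1 :=
  hitting_time_finite_as_general μ 𝓕 ξ K K' hK hadapted hint hdrift T
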